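/- arXiv:2307.05064 — 8 statements merged into one kernel-verified Lean document; each statement's English description precedes it below -/
import Mathlib

section
/- In stable acceptance semantics, acceptance and rejection are closed under binary union: if i ⊩ φ and j ⊩ φ then i ∪ j ⊩ φ, and if i ⫣ φ and j ⫣ φ then i ∪ j ⫣ φ. -/
/-- Formulas of the modal-epistemic language. -/
inductive Fml where
  | atom : ℕ → Fml
  | neg : Fml → Fml
  | conj : Fml → Fml → Fml
  | dia : Fml → Fml
  | know : Fml → Fml

/-- A bounded model: an information model (W, I) together with an
epistemic-alternatives function k and a worldly-information function info,
each assigning to w a state accessible at w (so w ∈ k w, w ∈ info w, and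
each of k w, info w is internally scoherent). -/
structure BModel (W : Type) where
  I : ℕ → Set W
  k : W → Set W
  info : W → Set W
  k_mem : ∀ w, w ∈ k w
  k_coh : ∀ w, ∀ u ∈ k w, info u ⊆ k w
  info_mem : ∀ w, w ∈ info w
  info_coh : ∀ w, ∀ u ∈ info w, info u ⊆ info w

variable {W : Type}

/-- A state i is internally scoherent: nonempty and info w ⊆ i for all w ∈ i. -/
def scoherent (M : BModel W) (i : Set W) : Prop :=
  i.Nonempty ∧ ∀ w ∈ i, M.info w ⊆ i

/-- A state i is accessible at w: internally scoherent and veridical at w. -/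
def saccessibleAt (M : BModel W) (i : Set W) (w : W) : Prop :=
  scoherent M i ∧ w ∈ i

/-- The accessible refinements of i: states j ⊆ i accessible at some w ∈ i. -/
def AccRef (M : BModel W) (i : Set W) : Set (Set W) :=
  {j | j ⊆ i ∧ ∃ w ∈ i, saccessibleAt M j w}

/-- Stable acceptance semantics: simultaneous acceptance (first component)
and rejection (second component) conditions for each formula. -/
def sEval (M : BModel W) : Fml → (Set W → Prop) × (Set W → Prop)
  | .atom n => (fun i => i ⊆ M.I n, fun i => ∀ w ∈ i, w ∉ M.I n)
  | .neg φ => ((sEval M φ).2, (sEval M φ).1)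
  | .conj φ ψ =>
      (fun i => (sEval M φ).1 i ∧ (sEval M ψ).1 i,
       fun i => ∃ i1 i2, i = i1 ∪ i2 ∧ (sEval M φ).2 i1 ∧ (sEval M ψ).2 i2)
  | .dia φ =>
      (fun i => ∃ w ∈ i, (sEval M φ).1 {w},
       fun i => ∀ w ∈ i, (sEval M φ).2 {w})
  | .know φ =>
      (fun i => ∀ w ∈ i, ∀ j ∈ AccRef M (M.k w), (sEval M φ).1 j,
       fun i => ∀ w ∈ i, ∃ j ∈ AccRef M (M.k w), ¬ (sEval M φ).1 j)

/-- i ⊩ φ : i saccepts φ. -/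
def saccepts (M : BModel W) (i : Set W) (φ : Fml) : Prop := (sEval M φ).1 i

/-- i ⫣ φ : i srejects φ. -/
def srejects (M : BModel W) (i : Set W) (φ : Fml) : Prop := (sEval M φ).2 i

/-- φ is ◇-srestricted: every occurrence of ◇ is within the scope of a K. -/
def srestricted : Fml → Prop
  | .atom _ => True
  | .neg φ => srestricted φ
  | .conj φ ψ => srestricted φ ∧ srestricted ψ
  | .dia _ => False
  | .know _ => True

/-- The normal form α₀ ∧ ◇α₁ ∧ ⋯ ∧ ◇αₙ. -/
def snform (α0 : Fml) (αs : List Fml) : Fml :=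
  αs.foldl (fun b a => .conj b (.dia a)) α0

/-- Acceptance and rejection are closed under binary union. -/
theorem stmt10 {W : Type} (M : BModel W) (φ : Fml) (i j : Set W) :
    (saccepts M i φ → saccepts M j φ → saccepts M (i ∪ j) φ) ∧
    (srejects M i φ → srejects M j φ → srejects M (i ∪ j) φ) := by
  induction φ generalizing i j with
  | atom n =>
    constructor
    · exact fun h1 h2 => Set.union_subset h1 h2
    · rintro h1 h2 w (hw|hw)
      exacts [h1 w hw, h2 w hw]
  | neg φ ih =>
    exact ⟨(ih i j).2, (ih i j).1⟩
  | conj φ ψ ihφ ihψ =>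
    constructor
    · rintro ⟨h1,h2⟩ ⟨h3,h4⟩
      exact ⟨(ihφ i j).1 h1 h3, (ihψ i j).1 h2 h4⟩
    · rintro ⟨i1,i2,rfl,h1,h2⟩ ⟨j1,j2,rfl,h3,h4⟩
      refine ⟨i1 ∪ j1, i2 ∪ j2, ?_, (ihφ i1 j1).2 h1 h3, (ihψ i2 j2).2 h2 h4⟩
      ext w; simp [Set.mem_union]; tauto
  | dia φ ih =>
    constructor
    · rintro ⟨w,hw,h⟩ _
      exact ⟨w, Or.inl hw, h⟩
    · rintro h1 h2 w (hw|hw)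
      exacts [h1 w hw, h2 w hw]
  | know φ ih =>
    constructor
    · rintro h1 h2 w (hw|hw)
      exacts [h1 w hw, h2 w hw]
    · rintro h1 h2 w (hw|hw)
      exacts [h1 w hw, h2 w hw]
end

section
/- In stable acceptance semantics, for an internally coherent state i, the following are equivalent: (A) every j ∈ Acc(i) accepts φ; (B) for every u ∈ i, the worldly state i^u accepts φ. -/
variable {W : Type}

/-- Acceptance and rejection are closed under nonempty unions. -/
theorem sUnionClosed {W : Type} (M : BModel W) (φ : Fml) :
    (∀ T : Set (Set W), T.Nonempty → (∀ j ∈ T, (sEval M φ).1 j) →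
      (sEval M φ).1 (⋃₀ T)) ∧
    (∀ T : Set (Set W), T.Nonempty → (∀ j ∈ T, (sEval M φ).2 j) →
      (sEval M φ).2 (⋃₀ T)) := by
  induction φ with
  | atom n =>
    constructor
    · intro T _ hT
      exact Set.sUnion_subset hT
    · rintro T _ hT w ⟨j, hj, hw⟩
      exact hT j hj w hw
  | neg φ ih =>
    exact ⟨ih.2, ih.1⟩
  | conj φ ψ ihφ ihψ =>
    constructor
    · intro T hne hT
      exact ⟨ihφ.1 T hne fun j hj => (hT j hj).1,
             ihψ.1 T hne fun j hj => (hT j hj).2⟩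
    · intro T hne hT
      choose f g hfg hf hg using hT
      refine ⟨⋃ j ∈ T, f j ‹_›, ⋃ j ∈ T, g j ‹_›, ?_, ?_, ?_⟩
      · ext w
        simp only [Set.mem_sUnion, Set.mem_union, Set.mem_iUnion]
        constructor
        · rintro ⟨j, hj, hw⟩
          rw [hfg j hj] at hw
          rcases hw with hw | hw
          · exact Or.inl ⟨j, hj, hw⟩
          · exact Or.inr ⟨j, hj, hw⟩
        · rintro (⟨j, hj, hw⟩ | ⟨j, hj, hw⟩)
          · exact ⟨j, hj, (hfg j hj) ▸ Or.inl hw⟩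
          · exact ⟨j, hj, (hfg j hj) ▸ Or.inr hw⟩
      · obtain ⟨j0, hj0⟩ := hne
        have : (⋃ j ∈ T, f j ‹_›) = ⋃₀ {s | ∃ j, ∃ hj : j ∈ T, s = f j hj} := by
          ext w; simp only [Set.mem_iUnion, Set.mem_sUnion, Set.mem_setOf_eq]
          constructor
          · rintro ⟨j, hj, hw⟩; exact ⟨f j hj, ⟨j, hj, rfl⟩, hw⟩
          · rintro ⟨s, ⟨j, hj, rfl⟩, hw⟩; exact ⟨j, hj, hw⟩
        rw [this]
        apply ihφ.2
        · exact ⟨f j0 hj0, j0, hj0, rfl⟩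
        · rintro s ⟨j, hj, rfl⟩; exact hf j hj
      · obtain ⟨j0, hj0⟩ := hne
        have : (⋃ j ∈ T, g j ‹_›) = ⋃₀ {s | ∃ j, ∃ hj : j ∈ T, s = g j hj} := by
          ext w; simp only [Set.mem_iUnion, Set.mem_sUnion, Set.mem_setOf_eq]
          constructor
          · rintro ⟨j, hj, hw⟩; exact ⟨g j hj, ⟨j, hj, rfl⟩, hw⟩
          · rintro ⟨s, ⟨j, hj, rfl⟩, hw⟩; exact ⟨j, hj, hw⟩
        rw [this]
        apply ihψ.2
        · exact ⟨g j0 hj0, j0, hj0, rfl⟩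
        · rintro s ⟨j, hj, rfl⟩; exact hg j hj
  | dia φ ih =>
    constructor
    · rintro T ⟨j0, hj0⟩ hT
      obtain ⟨w, hw, hwφ⟩ := hT j0 hj0
      exact ⟨w, ⟨j0, hj0, hw⟩, hwφ⟩
    · rintro T _ hT w ⟨j, hj, hw⟩
      exact hT j hj w hw
  | know φ _ =>
    constructor
    · rintro T _ hT w ⟨j, hj, hw⟩
      exact hT j hj w hw
    · rintro T _ hT w ⟨j, hj, hw⟩
      exact hT j hj w hw

/-- An internally scoherent state is the union of its worldly states. -/
theorem scoherent_eq_sUnion {W : Type} (M : BModel W) {i : Set W}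
    (h : scoherent M i) : i = ⋃₀ {s | ∃ w ∈ i, s = M.info w} := by
  ext v
  simp only [Set.mem_sUnion, Set.mem_setOf_eq]
  constructor
  · intro hv
    exact ⟨M.info v, ⟨v, hv, rfl⟩, M.info_mem v⟩
  · rintro ⟨s, ⟨w, hw, rfl⟩, hv⟩
    exact h.2 w hw hv

/-- For internally scoherent i: every accessible refinement of i saccepts φ
iff the worldly state info u saccepts φ for every u ∈ i. -/
theorem stmt11 {W : Type} (M : BModel W) (i : Set W) (φ : Fml)
    (h : scoherent M i) :
    (∀ j ∈ AccRef M i, saccepts M j φ) ↔ (∀ u ∈ i, saccepts M (M.info u) φ) := by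
  constructor
  · intro hA u hu
    apply hA
    exact ⟨h.2 u hu, u, hu, ⟨⟨u, M.info_mem u⟩, fun w hw => M.info_coh u w hw⟩, M.info_mem u⟩
  · rintro hB j ⟨hji, w, hw, hjcoh, hwj⟩
    have heq := scoherent_eq_sUnion M hjcoh
    unfold saccepts
    rw [heq]
    apply (sUnionClosed M φ).1
    · exact ⟨M.info w, w, hwj, rfl⟩
    · rintro s ⟨u, hu, rfl⟩
      exact hB u (hji hu)
end

section
/- In stable acceptance semantics, if φ is ◇-restricted (every occurrence of ◇ is within the scope of a K), then i ⊩ φ iff {w} ⊩ φ for all w ∈ i, and i ⫣ φ iff {w} ⫣ φ for all w ∈ i. -/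
variable {W : Type}

/-- Pointwise characterization of ◇-srestricted formulas. -/
theorem stmt12 {W : Type} (M : BModel W) (φ : Fml) (hφ : srestricted φ)
    (i : Set W) :
    (saccepts M i φ ↔ ∀ w ∈ i, saccepts M {w} φ) ∧
    (srejects M i φ ↔ ∀ w ∈ i, srejects M {w} φ) := by
  induction φ generalizing i with
  | atom n =>
    constructor
    · simp [saccepts, sEval, Set.subset_def]
    · simp [srejects, sEval]
  | neg φ ih =>
    exact ⟨(ih hφ i).2, (ih hφ i).1⟩
  | conj φ ψ ih1 ih2 =>
    obtain ⟨h1, h2⟩ := hφ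
    constructor
    · constructor
      · rintro ⟨ha, hb⟩ w hw
        exact ⟨(ih1 h1 i).1.mp ha w hw, (ih2 h2 i).1.mp hb w hw⟩
      · intro h
        exact ⟨(ih1 h1 i).1.mpr fun w hw => (h w hw).1,
               (ih2 h2 i).1.mpr fun w hw => (h w hw).2⟩
    · constructor
      · rintro ⟨i1, i2, rfl, ra, rb⟩ w hw
        rcases hw with hw | hw
        · exact ⟨{w}, ∅, by simp, (ih1 h1 i1).2.mp ra w hw,
            (ih2 h2 ∅).2.mpr (by simp)⟩
        · exact ⟨∅, {w}, by simp, (ih1 h1 ∅).2.mpr (by simp),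
            (ih2 h2 i2).2.mp rb w hw⟩
      · intro h
        have key : ∀ w ∈ i, srejects M {w} φ ∨ srejects M {w} ψ := by
          intro w hw
          obtain ⟨j1, j2, he, ra, rb⟩ := h w hw
          have : w ∈ j1 ∪ j2 := he ▸ rfl
          rcases this with hj | hj
          · left
            have : j1 = {w} := by
              apply subset_antisymm
              · intro x hx
                have : x ∈ j1 ∪ j2 := Or.inl hx
                rw [← he] at this; exact this
              · simpa using hj
            exact this ▸ ra
          · right
            have : j2 = {w} := by
              apply subset_antisymm
              · intro x hx
                have : x ∈ j1 ∪ j2 := Or.inr hx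
                rw [← he] at this; exact this
              · simpa using hj
            exact this ▸ rb
        refine ⟨{w ∈ i | srejects M {w} φ}, {w ∈ i | srejects M {w} ψ}, ?_, ?_, ?_⟩
        · ext w
          constructor
          · intro hw
            rcases key w hw with hk | hk
            · exact Or.inl ⟨hw, hk⟩
            · exact Or.inr ⟨hw, hk⟩
          · rintro (⟨hw, _⟩ | ⟨hw, _⟩) <;> exact hw
        · exact (ih1 h1 _).2.mpr fun w hw => hw.2
        · exact (ih2 h2 _).2.mpr fun w hw => hw.2
  | dia φ ih => exact absurd hφ (by simp [srestricted])
  | know φ ih =>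
    constructor
    · constructor
      · intro h w hw v hv
        simp only [Set.mem_singleton_iff] at hv
        subst hv; exact h v hw
      · intro h w hw
        exact h w hw w rfl
    · constructor
      · intro h w hw v hv
        simp only [Set.mem_singleton_iff] at hv
        subst hv; exact h v hw
      · intro h w hw
        exact h w hw w rfl
end

section
/- Normal form theorem: for every sentence φ of the modal-epistemic language, there exist n ≥ 0 and ◇-restricted sentences α_0, α_1, …, α_n such that for every internally coherent state i in every bounded model, i ⊩ φ iff i ⊩ α_0 ∧ ◇α_1 ∧ … ∧ ◇α_n. -/
variable {W : Type}

def FTop : Fml := .neg (.conj (.atom 0) (.neg (.atom 0)))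

lemma srestricted_FTop : srestricted FTop := by simp [FTop, srestricted]

lemma saccepts_FTop (M : BModel W) (i : Set W) : saccepts M i FTop := by
  show ∃ i1 i2, i = i1 ∪ i2 ∧ (∀ w ∈ i1, w ∉ M.I 0) ∧ i2 ⊆ M.I 0
  exact ⟨i \ M.I 0, i ∩ M.I 0, (Set.diff_union_inter i (M.I 0)).symm,
    fun w hw => hw.2, fun w hw => hw.2⟩

lemma saccepts_neg (M : BModel W) (i : Set W) (φ : Fml) :
    saccepts M i (.neg φ) ↔ srejects M i φ := Iff.rfl

lemma srejects_neg (M : BModel W) (i : Set W) (φ : Fml) :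
    srejects M i (.neg φ) ↔ saccepts M i φ := Iff.rfl

lemma saccepts_conj (M : BModel W) (i : Set W) (φ ψ : Fml) :
    saccepts M i (.conj φ ψ) ↔ saccepts M i φ ∧ saccepts M i ψ := Iff.rfl

lemma srejects_conj (M : BModel W) (i : Set W) (φ ψ : Fml) :
    srejects M i (.conj φ ψ) ↔
      ∃ i1 i2, i = i1 ∪ i2 ∧ srejects M i1 φ ∧ srejects M i2 ψ := Iff.rfl

lemma saccepts_dia (M : BModel W) (i : Set W) (φ : Fml) :
    saccepts M i (.dia φ) ↔ ∃ w ∈ i, saccepts M {w} φ := Iff.rfl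

lemma srejects_dia (M : BModel W) (i : Set W) (φ : Fml) :
    srejects M i (.dia φ) ↔ ∀ w ∈ i, srejects M {w} φ := Iff.rfl

lemma saccepts_atom (M : BModel W) (i : Set W) (n : ℕ) :
    saccepts M i (.atom n) ↔ i ⊆ M.I n := Iff.rfl

lemma srejects_atom (M : BModel W) (i : Set W) (n : ℕ) :
    srejects M i (.atom n) ↔ ∀ w ∈ i, w ∉ M.I n := Iff.rfl

lemma flat (M : BModel W) :
    ∀ (α : Fml), srestricted α → ∀ (i : Set W),
      (saccepts M i α ↔ ∀ w ∈ i, saccepts M {w} α) ∧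
      (srejects M i α ↔ ∀ w ∈ i, srejects M {w} α) := by
  intro α
  induction α with
  | atom n =>
    intro _ i
    constructor
    · simp [saccepts_atom, Set.subset_def]
    · simp [srejects_atom]
  | neg a ih =>
    intro h i
    have h' : srestricted a := h
    exact ⟨by simpa [saccepts_neg] using (ih h' i).2,
           by simpa [srejects_neg] using (ih h' i).1⟩
  | conj a b iha ihb =>
    rintro ⟨ha, hb⟩ i
    constructor
    · simp only [saccepts_conj]
      rw [(iha ha i).1, (ihb hb i).1]
      constructor
      · rintro ⟨h1, h2⟩ w hw; exact ⟨h1 w hw, h2 w hw⟩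
      · intro h; exact ⟨fun w hw => (h w hw).1, fun w hw => (h w hw).2⟩
    · -- rejection of a conjunction is flat
      have key : ∀ w : W, srejects M {w} (.conj a b) ↔
          srejects M {w} a ∨ srejects M {w} b := by
        intro w
        rw [srejects_conj]
        constructor
        · rintro ⟨j1, j2, hj, h1, h2⟩
          have hw : w ∈ j1 ∨ w ∈ j2 := by
            have : w ∈ j1 ∪ j2 := hj ▸ rfl
            exact this
          rcases hw with hw | hw
          · exact Or.inl (by
              have := ((iha ha j1).2.mp h1) w hw
              simpa using this)
          · exact Or.inr (by
              have := ((ihb hb j2).2.mp h2) w hw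
              simpa using this)
        · rintro (h | h)
          · exact ⟨{w}, ∅, by simp, h, (ihb hb ∅).2.mpr (by simp)⟩
          · exact ⟨∅, {w}, by simp, (iha ha ∅).2.mpr (by simp), h⟩
      constructor
      · rintro ⟨i1, i2, hi, h1, h2⟩ w hw
        rw [key w]
        rcases (hi ▸ hw : w ∈ i1 ∪ i2) with hw' | hw'
        · exact Or.inl (((iha ha i1).2.mp h1) w hw')
        · exact Or.inr (((ihb hb i2).2.mp h2) w hw')
      · intro h
        rw [srejects_conj]
        refine ⟨{w ∈ i | srejects M {w} a}, {w ∈ i | srejects M {w} b}, ?_, ?_, ?_⟩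
        · ext w
          simp only [Set.mem_union, Set.mem_setOf_eq]
          constructor
          · intro hw
            rcases (key w).mp (h w hw) with h' | h'
            · exact Or.inl ⟨hw, h'⟩
            · exact Or.inr ⟨hw, h'⟩
          · rintro (⟨hw, _⟩ | ⟨hw, _⟩) <;> exact hw
        · exact (iha ha _).2.mpr (fun w hw => hw.2)
        · exact (ihb hb _).2.mpr (fun w hw => hw.2)
  | dia a ih =>
    intro h
    exact absurd h (by simp [srestricted])
  | know a ih =>
    intro _ i
    constructor
    · constructor
      · intro h w hw u hu
        rcases hu with rfl
        exact h _ hw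
      · intro h w hw
        exact h w hw w rfl
    · constructor
      · intro h w hw u hu
        rcases hu with rfl
        exact h _ hw
      · intro h w hw
        exact h w hw w rfl

lemma saccepts_foldl (M : BModel W) (i : Set W) (l : List Fml) (a : Fml) :
    saccepts M i (l.foldl .conj a) ↔ saccepts M i a ∧ ∀ x ∈ l, saccepts M i x := by
  induction l generalizing a with
  | nil => simp
  | cons x xs ih =>
    simp only [List.foldl_cons, ih, saccepts_conj, List.mem_cons]
    constructor
    · rintro ⟨⟨h1, h2⟩, h3⟩
      exact ⟨h1, fun y hy => hy.elim (fun h => h ▸ h2) (h3 y)⟩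
    · rintro ⟨h1, h2⟩
      exact ⟨⟨h1, h2 x (Or.inl rfl)⟩, fun y hy => h2 y (Or.inr hy)⟩

lemma srestricted_foldl (l : List Fml) (a : Fml) (ha : srestricted a)
    (hl : ∀ x ∈ l, srestricted x) : srestricted (l.foldl .conj a) := by
  induction l generalizing a with
  | nil => exact ha
  | cons x xs ih =>
    exact ih (.conj a x) ⟨ha, hl x (by simp)⟩ (fun y hy => hl y (by simp [hy]))

lemma saccepts_snform (M : BModel W) (i : Set W) (l : List Fml) (a : Fml) :
    saccepts M i (snform a l) ↔
      saccepts M i a ∧ ∀ x ∈ l, ∃ w ∈ i, saccepts M {w} x := by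
  induction l generalizing a with
  | nil => simp [snform]
  | cons x xs ih =>
    show saccepts M i (snform (.conj a (.dia x)) xs) ↔ _
    rw [ih]
    simp only [saccepts_conj, saccepts_dia, List.mem_cons]
    constructor
    · rintro ⟨⟨h1, h2⟩, h3⟩
      exact ⟨h1, fun y hy => hy.elim (fun h => h ▸ h2) (h3 y)⟩
    · rintro ⟨h1, h2⟩
      exact ⟨⟨h1, h2 x (Or.inl rfl)⟩, fun y hy => h2 y (Or.inr hy)⟩

lemma main (φ : Fml) :
    ∃ (α0 : Fml) (αs : List Fml) (β0 : Fml) (βs : List Fml),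
      srestricted α0 ∧ (∀ α ∈ αs, srestricted α) ∧
      srestricted β0 ∧ (∀ β ∈ βs, srestricted β) ∧
      ∀ (W : Type) (M : BModel W) (i : Set W),
        (saccepts M i φ ↔ saccepts M i α0 ∧ ∀ α ∈ αs, ∃ w ∈ i, saccepts M {w} α) ∧
        (srejects M i φ ↔ saccepts M i β0 ∧ ∀ β ∈ βs, ∃ w ∈ i, saccepts M {w} β) := by
  induction φ with
  | atom n =>
    refine ⟨.atom n, [], .neg (.atom n), [], trivial, by simp, trivial, by simp, ?_⟩
    intro W M i
    constructor
    · simp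
    · simp [saccepts_neg]
  | neg a ih =>
    obtain ⟨α0, αs, β0, βs, h1, h2, h3, h4, h5⟩ := ih
    exact ⟨β0, βs, α0, αs, h3, h4, h1, h2, fun W M i =>
      ⟨by rw [saccepts_neg]; exact (h5 W M i).2,
       by rw [srejects_neg]; exact (h5 W M i).1⟩⟩
  | conj a b iha ihb =>
    obtain ⟨α0a, αsa, β0a, βsa, ha1, ha2, ha3, ha4, ha5⟩ := iha
    obtain ⟨α0b, αsb, β0b, βsb, hb1, hb2, hb3, hb4, hb5⟩ := ihb
    refine ⟨.conj α0a α0b, αsa ++ αsb,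
      .neg (.conj (.neg β0a) (.neg β0b)),
      βsa.map (Fml.conj β0a) ++ βsb.map (Fml.conj β0b),
      ⟨ha1, hb1⟩, ?_, ⟨ha3, hb3⟩, ?_, ?_⟩
    · intro α hα
      rcases List.mem_append.mp hα with h | h
      · exact ha2 α h
      · exact hb2 α h
    · intro β hβ
      rcases List.mem_append.mp hβ with h | h
      · obtain ⟨γ, hγ, rfl⟩ := List.mem_map.mp h
        exact ⟨ha3, ha4 γ hγ⟩
      · obtain ⟨γ, hγ, rfl⟩ := List.mem_map.mp h
        exact ⟨hb3, hb4 γ hγ⟩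
    intro W M i
    constructor
    · rw [saccepts_conj, saccepts_conj, (ha5 W M i).1, (hb5 W M i).1]
      constructor
      · rintro ⟨⟨h1, h2⟩, h3, h4⟩
        exact ⟨⟨h1, h3⟩, fun α hα => (List.mem_append.mp hα).elim (h2 α) (h4 α)⟩
      · rintro ⟨⟨h1, h3⟩, h⟩
        exact ⟨⟨h1, fun α hα => h α (List.mem_append.mpr (Or.inl hα))⟩,
               h3, fun α hα => h α (List.mem_append.mpr (Or.inr hα))⟩
    · have hβ0 : saccepts M i (.neg (.conj (.neg β0a) (.neg β0b))) ↔
          ∃ j1 j2, i = j1 ∪ j2 ∧ saccepts M j1 β0a ∧ saccepts M j2 β0b := Iff.rfl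
      rw [srejects_conj, hβ0]
      constructor
      · rintro ⟨i1, i2, rfl, r1, r2⟩
        obtain ⟨hacc1, hex1⟩ := (ha5 W M i1).2.mp r1
        obtain ⟨hacc2, hex2⟩ := (hb5 W M i2).2.mp r2
        refine ⟨⟨i1, i2, rfl, hacc1, hacc2⟩, ?_⟩
        intro β hβ
        rcases List.mem_append.mp hβ with h | h
        · obtain ⟨γ, hγ, rfl⟩ := List.mem_map.mp h
          obtain ⟨w, hw, hwγ⟩ := hex1 γ hγ
          exact ⟨w, Or.inl hw,
            ⟨((flat M β0a ha3 i1).1.mp hacc1) w hw, hwγ⟩⟩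
        · obtain ⟨γ, hγ, rfl⟩ := List.mem_map.mp h
          obtain ⟨w, hw, hwγ⟩ := hex2 γ hγ
          exact ⟨w, Or.inr hw,
            ⟨((flat M β0b hb3 i2).1.mp hacc2) w hw, hwγ⟩⟩
      · rintro ⟨⟨j1, j2, hij, hacc1, hacc2⟩, hex⟩
        refine ⟨j1 ∪ {w ∈ i | saccepts M {w} β0a},
                j2 ∪ {w ∈ i | saccepts M {w} β0b}, ?_, ?_, ?_⟩
        · apply Set.Subset.antisymm
          · intro w hw
            rcases (hij ▸ hw : w ∈ j1 ∪ j2) with h | h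
            · exact Or.inl (Or.inl h)
            · exact Or.inr (Or.inl h)
          · rintro w ((h | h) | (h | h))
            · exact hij ▸ Or.inl h
            · exact h.1
            · exact hij ▸ Or.inr h
            · exact h.1
        · apply (ha5 W M _).2.mpr
          constructor
          · apply (flat M β0a ha3 _).1.mpr
            rintro w (hw | hw)
            · exact ((flat M β0a ha3 j1).1.mp hacc1) w hw
            · exact hw.2
          · intro γ hγ
            obtain ⟨w, hw, hw1, hw2⟩ :=
              hex (.conj β0a γ) (List.mem_append.mpr (Or.inl (List.mem_map.mpr ⟨γ, hγ, rfl⟩)))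
            exact ⟨w, Or.inr ⟨hw, hw1⟩, hw2⟩
        · apply (hb5 W M _).2.mpr
          constructor
          · apply (flat M β0b hb3 _).1.mpr
            rintro w (hw | hw)
            · exact ((flat M β0b hb3 j2).1.mp hacc2) w hw
            · exact hw.2
          · intro γ hγ
            obtain ⟨w, hw, hw1, hw2⟩ :=
              hex (.conj β0b γ) (List.mem_append.mpr (Or.inr (List.mem_map.mpr ⟨γ, hγ, rfl⟩)))
            exact ⟨w, Or.inr ⟨hw, hw1⟩, hw2⟩
  | dia a ih =>
    obtain ⟨α0, αs, β0, βs, h1, h2, h3, h4, h5⟩ := ih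
    have hγr : srestricted (αs.foldl .conj α0) := srestricted_foldl αs α0 h1 h2
    have hδr : srestricted (βs.foldl .conj β0) := srestricted_foldl βs β0 h3 h4
    refine ⟨FTop, [αs.foldl .conj α0], βs.foldl .conj β0, [],
      srestricted_FTop, by simpa using hγr, hδr, by simp, ?_⟩
    intro W M i
    constructor
    · rw [saccepts_dia]
      constructor
      · rintro ⟨w, hw, hacc⟩
        refine ⟨saccepts_FTop M i, ?_⟩
        intro x hx
        rcases List.mem_singleton.mp hx with rfl
        refine ⟨w, hw, ?_⟩
        rw [saccepts_foldl]
        obtain ⟨h6, h7⟩ := (h5 W M {w}).1.mp hacc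
        refine ⟨h6, fun γ hγ => ?_⟩
        obtain ⟨u, hu, hx⟩ := h7 γ hγ
        rcases hu with rfl
        exact hx
      · rintro ⟨-, h⟩
        obtain ⟨w, hw, hγ⟩ := h _ (List.mem_singleton.mpr rfl)
        rw [saccepts_foldl] at hγ
        exact ⟨w, hw, (h5 W M {w}).1.mpr ⟨hγ.1, fun γ' hγ' => ⟨w, rfl, hγ.2 γ' hγ'⟩⟩⟩
    · rw [srejects_dia]
      constructor
      · intro h
        refine ⟨?_, by simp⟩
        apply (flat M _ hδr i).1.mpr
        intro w hw
        rw [saccepts_foldl]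
        obtain ⟨h6, h7⟩ := (h5 W M {w}).2.mp (h w hw)
        refine ⟨h6, fun γ hγ => ?_⟩
        obtain ⟨u, hu, hx⟩ := h7 γ hγ
        rcases hu with rfl
        exact hx
      · rintro ⟨hβ, -⟩ w hw
        have hh := ((flat M _ hδr i).1.mp hβ) w hw
        rw [saccepts_foldl] at hh
        exact (h5 W M {w}).2.mpr ⟨hh.1, fun γ hγ => ⟨w, rfl, hh.2 γ hγ⟩⟩
  | know a ih =>
    refine ⟨.know a, [], .neg (.know a), [], trivial, by simp, trivial, by simp, ?_⟩
    intro W M i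
    constructor
    · simp
    · simp [saccepts_neg]

/-- Normal form theorem: every φ is, over internally scoherent states,
acceptance-equivalent to α₀ ∧ ◇α₁ ∧ ⋯ ∧ ◇αₙ with each αᵢ ◇-srestricted. -/
theorem stmt14 (φ : Fml) :
    ∃ (α0 : Fml) (αs : List Fml), srestricted α0 ∧ (∀ α ∈ αs, srestricted α) ∧
      ∀ (W : Type) (M : BModel W) (i : Set W), scoherent M i →
        (saccepts M i φ ↔ saccepts M i (snform α0 αs)) := by
  obtain ⟨α0, αs, β0, βs, h1, h2, h3, h4, h5⟩ := main φ
  refine ⟨α0, αs, h1, h2, fun W M i _ => ?_⟩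
  rw [saccepts_snform]
  exact (h5 W M i).1
end

section
/- In stable acceptance semantics, Generalized Negative Transparency holds: for every internally coherent state i, i ⊩ K¬(p ∧ ◇q) iff i ⊩ K¬(p ∧ q). -/
variable {W : Type}

/-- Generalized Negative Transparency: for internally scoherent i,
i ⊩ K¬(p ∧ ◇q) iff i ⊩ K¬(p ∧ q). -/
theorem stmt15 {W : Type} (M : BModel W) (i : Set W) (h : scoherent M i)
    (np nq : ℕ) :
    saccepts M i (.know (.neg (.conj (.atom np) (.dia (.atom nq))))) ↔
      saccepts M i (.know (.neg (.conj (.atom np) (.atom nq)))) := by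
  simp only [saccepts, sEval]
  constructor
  · intro H w hw j hj
    obtain ⟨i1, i2, heq, h1, h2⟩ := H w hw j hj
    exact ⟨i1, i2, heq, h1, fun v hv => h2 v hv v rfl⟩
  · intro H w hw j hj
    obtain ⟨i1, i2, heq, h1, h2⟩ := H w hw j hj
    refine ⟨i1, i2, heq, h1, fun v hv u hu => ?_⟩
    cases hu
    exact h2 v hv
end

section
/- In stable acceptance semantics, Negative Transparency holds: for every internally coherent state i, i ⊩ K¬◇p iff i ⊩ K¬p. -/
variable {W : Type}

/-- Negative Transparency: for internally scoherent i, i ⊩ K¬◇p iff i ⊩ K¬p. -/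
theorem stmt16 {W : Type} (M : BModel W) (i : Set W) (h : scoherent M i)
    (n : ℕ) :
    saccepts M i (.know (.neg (.dia (.atom n)))) ↔
      saccepts M i (.know (.neg (.atom n))) := by
  simp only [saccepts, sEval]
  constructor <;> intro h' w hw j hj <;> have := h' w hw j hj <;>
    intro v hv <;> simpa using this v hv
end

section
/- In stable acceptance semantics, Veridicality holds: for every sentence φ, Kφ coherently entails φ, i.e., every internally coherent state accepting Kφ also accepts φ. -/
variable {W : Type}

lemma union_both (M : BModel W) (φ : Fml) {A : Type} [Nonempty A] :
    ∀ (f : A → Set W),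
      ((∀ a, (sEval M φ).1 (f a)) → (sEval M φ).1 (⋃ a, f a)) ∧
      ((∀ a, (sEval M φ).2 (f a)) → (sEval M φ).2 (⋃ a, f a)) := by
  induction φ with
  | atom n =>
      intro f
      constructor
      · intro h
        exact Set.iUnion_subset h
      · intro h w hw
        obtain ⟨a, ha⟩ := Set.mem_iUnion.1 hw
        exact h a w ha
  | neg φ ih =>
      intro f
      exact ⟨(ih f).2, (ih f).1⟩
  | conj φ ψ ihφ ihψ =>
      intro f
      constructor
      · intro h
        exact ⟨(ihφ f).1 (fun a => (h a).1), (ihψ f).1 (fun a => (h a).2)⟩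
      · intro h
        choose i1 i2 heq h1 h2 using h
        refine ⟨⋃ a, i1 a, ⋃ a, i2 a, ?_, (ihφ i1).2 h1, (ihψ i2).2 h2⟩
        rw [← Set.iUnion_union_distrib]
        exact Set.iUnion_congr heq
  | dia φ ih =>
      intro f
      constructor
      · intro h
        obtain ⟨a⟩ := ‹Nonempty A›
        obtain ⟨w, hw, hφ⟩ := h a
        exact ⟨w, Set.mem_iUnion.2 ⟨a, hw⟩, hφ⟩
      · intro h w hw
        obtain ⟨a, ha⟩ := Set.mem_iUnion.1 hw
        exact h a w ha
  | know φ ih =>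
      intro f
      constructor
      · intro h w hw
        obtain ⟨a, ha⟩ := Set.mem_iUnion.1 hw
        exact h a w ha
      · intro h w hw
        obtain ⟨a, ha⟩ := Set.mem_iUnion.1 hw
        exact h a w ha

lemma scoherent_eq_iUnion (M : BModel W) (i : Set W) (h : scoherent M i) :
    i = ⋃ w : i, M.info w.1 := by
  apply Set.Subset.antisymm
  · intro w hw
    exact Set.mem_iUnion.2 ⟨⟨w, hw⟩, M.info_mem w⟩
  · exact Set.iUnion_subset (fun w => h.2 w.1 w.2)

/-- Veridicality: every internally scoherent state accepting Kφ saccepts φ. -/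
theorem stmt17 {W : Type} (M : BModel W) (i : Set W) (h : scoherent M i)
    (φ : Fml) (hK : saccepts M i (.know φ)) :
    saccepts M i φ := by
  have hne : Nonempty i := h.1.to_subtype
  have key : ∀ w : i, saccepts M (M.info w.1) φ := by
    intro ⟨w, hw⟩
    apply hK w hw (M.info w)
    refine ⟨M.k_coh w w (M.k_mem w), w, M.k_mem w,
      ⟨⟨w, M.info_mem w⟩, fun u hu => M.info_coh w u hu⟩, M.info_mem w⟩
  have := (union_both M φ (fun w : i => M.info w.1)).1 key
  rwa [saccepts, scoherent_eq_iUnion M i h]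
end

section
/- In stable acceptance semantics, Uniformity fails: there is a bounded model and an internally coherent state i such that i ⊩ ◇p but i does not accept ¬K¬p. -/
variable {W : Type}

/-- Uniformity fails: some bounded model has an internally scoherent state
accepting ◇p but not accepting ¬K¬p. -/
theorem stmt18 : ∃ (W : Type) (M : BModel W) (i : Set W) (n : ℕ),
    scoherent M i ∧ saccepts M i (.dia (.atom n)) ∧
    ¬ saccepts M i (.neg (.know (.neg (.atom n)))) := by
  refine ⟨Bool, ⟨fun _ => {true}, fun w => {w}, fun w => {w},
    fun w => rfl, fun w u hu => by simp_all, fun w => rfl, fun w u hu => by simp_all⟩,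
    Set.univ, 0, ⟨⟨true, trivial⟩, fun w _ => Set.subset_univ _⟩,
    ⟨true, trivial, by simp [sEval]⟩, ?_⟩
  intro h
  obtain ⟨j, ⟨hj1, w, hw, ⟨⟨x, hx⟩, hcoh⟩, hwj⟩, hrej⟩ := h false trivial
  simp only [Set.mem_singleton_iff] at hw; subst hw
  exact hrej (fun u hu => by have := hj1 hu; simp_all [sEval])
end
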